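/- arXiv:2509.20332 — 5 statements merged into one kernel-verified Lean document; each statement's English description precedes it below -/
import Mathlib

section
/- Let X, Y be disjoint sets of distinct reals, N = |X| + |Y|, x ∈ X, X' = X \ {x}, and x* a real distinct from all values in X' ∪ Y, X* = {x*} ∪ X'. Suppose (rank(x, X∪Y) - (N+1)/2)(rank(x*, X*∪Y) - (N+1)/2) ≥ 0 and |rank(x, X∪Y) - (N+1)/2| = |rank(x*, X*∪Y) - (N+1)/2| + 1. Then the Ansari-Bradley statistic satisfies T(X,Y) ≥ T(X*,Y). -/
open Finset

/-- rank of `x` in `Z`: number of elements of `Z` less than or equal to `x`. -/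
noncomputable def rk (x : ℝ) (Z : Finset ℝ) : ℕ := (Z.filter (fun z => z ≤ x)).card

/-- Ansari-Bradley test statistic. -/
noncomputable def ABT (A B : Finset ℝ) : ℝ :=
  ∑ a ∈ A, |(rk a (A ∪ B) : ℝ) - (((A ∪ B).card : ℝ) + 1) / 2|

/-!
Write `S = X' ∪ Y`, so that `X ∪ Y = S ∪ {x}` and `X* ∪ Y = S ∪ {x*}`. Replacing `x` by `x*`
changes the rank of each `a ∈ S` by `[x ≤ a] - [x* ≤ a]`; in absolute value these changes add up
to the number of points of `S` between `x` and `x*`, that is `|rank(x, S) - rank(x*, S)|`, and the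
sign and size hypotheses force this to be `1`. Hence the terms of `X'` grow by at most `1` in
total, while the term of `x` exceeds the term of `x*` by exactly `1`.
-/

lemma rk_insert_of_notMem {t : ℝ} {S : Finset ℝ} (ht : t ∉ S) (a : ℝ) :
    rk a (insert t S) = rk a S + if t ≤ a then 1 else 0 := by
  unfold rk
  rw [filter_insert]
  split_ifs
  · exact card_insert_of_notMem fun h => ht (mem_filter.mp h).1
  · rfl

lemma rk_insert_self {t : ℝ} {S : Finset ℝ} (ht : t ∉ S) : rk t (insert t S) = rk t S + 1 := by
  simp [rk_insert_of_notMem ht]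

lemma rk_eq_sum_ite (t : ℝ) (S : Finset ℝ) :
    (rk t S : ℝ) = ∑ a ∈ S, if a ≤ t then (1 : ℝ) else 0 := by
  rw [rk, sum_boole]

lemma abs_rk_sub_rk_eq_sum_abs (S : Finset ℝ) (x y : ℝ) :
    |(rk x S : ℝ) - rk y S|
      = ∑ a ∈ S, |(if a ≤ x then (1 : ℝ) else 0) - if a ≤ y then 1 else 0| := by
  wlog hxy : y ≤ x generalizing x y
  · rw [abs_sub_comm, this y x (le_of_not_ge hxy)]
    exact sum_congr rfl fun a _ => abs_sub_comm _ _
  have hnonneg : ∀ a ∈ S, 0 ≤ (if a ≤ x then (1 : ℝ) else 0) - if a ≤ y then 1 else 0 := by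
    intro a _
    by_cases hay : a ≤ y
    · simp [hay, hay.trans hxy]
    · split_ifs <;> norm_num
  rw [sum_congr rfl fun a ha => abs_of_nonneg (hnonneg a ha), ← abs_sum_of_nonneg hnonneg,
    sum_sub_distrib, rk_eq_sum_ite, rk_eq_sum_ite]

lemma sum_abs_rk_insert_sub_rk_insert {x y : ℝ} {S : Finset ℝ} (hx : x ∉ S) (hy : y ∉ S) :
    ∑ a ∈ S, |(rk a (insert y S) : ℝ) - rk a (insert x S)| = |(rk x S : ℝ) - rk y S| := by
  rw [abs_rk_sub_rk_eq_sum_abs]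
  refine sum_congr rfl fun a ha => ?_
  have hax : a ≠ x := ne_of_mem_of_not_mem ha hx
  have hay : a ≠ y := ne_of_mem_of_not_mem ha hy
  rw [rk_insert_of_notMem hx, rk_insert_of_notMem hy]
  rcases hax.lt_or_gt with h | h <;> rcases hay.lt_or_gt with h' | h' <;>
    simp [h.le, h'.le, h.not_ge, h'.not_ge]

lemma abs_sub_eq_abs_sub_abs_of_mul_nonneg {α : Type*} [Ring α] [LinearOrder α]
    [IsStrictOrderedRing α] {u v : α} (h : 0 ≤ u * v) : |u - v| = |(|u| - |v|)| := by
  rcases mul_nonneg_iff.mp h with ⟨hu, hv⟩ | ⟨hu, hv⟩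
  · rw [abs_of_nonneg hu, abs_of_nonneg hv]
  · rw [abs_of_nonpos hu, abs_of_nonpos hv, neg_sub_neg, abs_sub_comm]

lemma ABT_insert {x : ℝ} {A B : Finset ℝ} (hx : x ∉ A ∪ B) :
    ABT (insert x A) B = |(rk x (A ∪ B) : ℝ) + 1 - ((#(A ∪ B) : ℝ) + 2) / 2|
      + ∑ a ∈ A, |(rk a (insert x (A ∪ B)) : ℝ) - ((#(A ∪ B) : ℝ) + 2) / 2| := by
  rw [ABT, insert_union, card_insert_of_notMem hx, sum_insert fun h => hx (mem_union_left B h),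
    rk_insert_self hx]
  push_cast
  ring_nf

lemma sum_abs_rk_insert_sub_le {x y c : ℝ} {A S : Finset ℝ} (hAS : A ⊆ S) (hx : x ∉ S)
    (hy : y ∉ S) :
    ∑ a ∈ A, |(rk a (insert y S) : ℝ) - c|
      ≤ ∑ a ∈ A, |(rk a (insert x S) : ℝ) - c| + |(rk x S : ℝ) - rk y S| :=
  calc ∑ a ∈ A, |(rk a (insert y S) : ℝ) - c|
      ≤ ∑ a ∈ A, (|(rk a (insert x S) : ℝ) - c| + |(rk a (insert y S) : ℝ) - rk a (insert x S)|) :=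
        sum_le_sum fun a _ => (abs_sub_le _ _ _).trans_eq (add_comm _ _)
    _ ≤ _ := by
        rw [sum_add_distrib, ← sum_abs_rk_insert_sub_rk_insert hx hy]
        gcongr

theorem stmt3 (X Y : Finset ℝ) (x xs : ℝ) (hd : Disjoint X Y) (hx : x ∈ X)
    (X' Xs : Finset ℝ) (hX' : X' = X.erase x) (hxs : xs ∉ X' ∪ Y)
    (hXs : Xs = insert xs X') (N : ℕ) (hN : N = X.card + Y.card)
    (hsign : ((rk x (X ∪ Y) : ℝ) - ((N : ℝ) + 1) / 2)
        * ((rk xs (Xs ∪ Y) : ℝ) - ((N : ℝ) + 1) / 2) ≥ 0)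
    (habs : |(rk x (X ∪ Y) : ℝ) - ((N : ℝ) + 1) / 2|
        = |(rk xs (Xs ∪ Y) : ℝ) - ((N : ℝ) + 1) / 2| + 1) :
    ABT X Y ≥ ABT Xs Y := by
  have hxS : x ∉ X' ∪ Y := by
    simp [hX', fun h : x ∈ Y => disjoint_left.mp hd hx h]
  have hX : X = insert x X' := by rw [hX', insert_erase hx]
  have hN' : (N : ℝ) + 1 = (#(X' ∪ Y) : ℝ) + 2 := by
    rw [hN, ← card_union_of_disjoint hd, hX, insert_union, card_insert_of_notMem hxS]
    push_cast; ring
  rw [hX, hXs, insert_union, insert_union, rk_insert_self hxS, rk_insert_self hxs, hN']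
    at hsign habs
  push_cast at hsign habs
  have hgap : |(rk x (X' ∪ Y) : ℝ) - rk xs (X' ∪ Y)| = 1 := by
    have := abs_sub_eq_abs_sub_abs_of_mul_nonneg hsign
    rw [habs, add_sub_cancel_left, abs_one] at this
    rw [← this]; ring_nf
  rw [hX, hXs, ABT_insert hxS, ABT_insert hxs]
  linarith [sum_abs_rk_insert_sub_le (c := ((#(X' ∪ Y) : ℝ) + 2) / 2) subset_union_left hxS hxs]
end

section
/- Let X, Y be disjoint sets of distinct reals, N = |X| + |Y|, x ∈ X, X' = X \ {x}, and x* a real distinct from all values in X' ∪ Y, X* = {x*} ∪ X'. If |rank(x*, X*∪Y) - (N+1)/2| equals 0 when N is odd (respectively 1/2 when N is even), then T(X,Y) ≥ T(X*,Y), i.e., placing the replaced value at the central rank minimizes the Ansari-Bradley statistic over the single missing value. -/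
open Finset

/-!
Since the ranks of the elements of `X ∪ Y` run through `1, …, N`, the sum `T(X,Y) + T(Y,X)`
depends on `N` alone, so it suffices to show `T(Y,X) ≤ T(Y,X*)`, which holds term by term.
Replacing `x` by `x*` changes the rank of `y ∈ Y` only when `y` lies between `x` and `x*`, and
then by one, away from the rank of `x*`. Since that rank is central, `y` ends up at least as far
from `(N+1)/2` as before.
-/

lemma rk_insert_of_le {a t : ℝ} {Z : Finset ℝ} (ht : t ∉ Z) (h : t ≤ a) :
    rk a (insert t Z) = rk a Z + 1 := by
  unfold rk
  rw [filter_insert, if_pos h, card_insert_of_notMem (fun hm => ht (mem_filter.1 hm).1)]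

lemma rk_insert_of_lt {a t : ℝ} {Z : Finset ℝ} (h : a < t) : rk a (insert t Z) = rk a Z := by
  unfold rk
  rw [filter_insert, if_neg (not_le.2 h)]

lemma rk_le_rk {a b : ℝ} (Z : Finset ℝ) (h : a ≤ b) : rk a Z ≤ rk b Z :=
  card_le_card (monotone_filter_right Z fun _ _ hz => hz.trans h)

lemma rk_lt_rk {a b : ℝ} {Z : Finset ℝ} (hb : b ∈ Z) (h : a < b) : rk a Z < rk b Z := by
  refine card_lt_card ((ssubset_iff_of_subset ?_).2 ⟨b, ?_, ?_⟩)
  · exact monotone_filter_right Z fun _ _ hz => hz.trans h.le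
  · exact mem_filter.2 ⟨hb, le_rfl⟩
  · exact fun hm => (mem_filter.1 hm).2.not_gt h

lemma rk_mem_Icc {a : ℝ} {Z : Finset ℝ} (ha : a ∈ Z) : rk a Z ∈ Icc 1 #Z :=
  mem_Icc.2 ⟨card_pos.2 ⟨a, mem_filter.2 ⟨ha, le_rfl⟩⟩, card_filter_le _ _⟩

lemma injOn_rk (Z : Finset ℝ) : Set.InjOn (rk · Z) Z := by
  intro a ha b hb hab
  rcases lt_trichotomy a b with h | h | h
  · exact absurd hab (rk_lt_rk hb h).ne
  · exact h
  · exact absurd hab (rk_lt_rk ha h).ne'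

lemma image_rk (Z : Finset ℝ) : Z.image (rk · Z) = Icc 1 #Z := by
  refine eq_of_subset_of_card_le (fun i hi => ?_) ?_
  · obtain ⟨a, ha, rfl⟩ := mem_image.1 hi
    exact rk_mem_Icc ha
  · rw [card_image_of_injOn (injOn_rk Z), Nat.card_Icc, Nat.add_sub_cancel]

lemma sum_comp_rk {M : Type*} [AddCommMonoid M] (Z : Finset ℝ) (g : ℕ → M) :
    ∑ a ∈ Z, g (rk a Z) = ∑ i ∈ Icc 1 #Z, g i := by
  rw [← image_rk, sum_image (injOn_rk Z)]

lemma ABT_add_ABT_swap {A B : Finset ℝ} (h : Disjoint A B) :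
    ABT A B + ABT B A = ∑ i ∈ Icc 1 #(A ∪ B), |(i : ℝ) - ((#(A ∪ B) : ℝ) + 1) / 2| := by
  unfold ABT
  rw [union_comm B A, ← sum_union h, sum_comp_rk (A ∪ B) fun i => |(i : ℝ) - _|]

lemma abs_rk_insert_sub_le {W : Finset ℝ} {x xs y c : ℝ} (hx : x ∉ W) (hxs : xs ∉ W)
    (hy : y ∈ W) (hc : |(rk xs (insert xs W) : ℝ) - c| ≤ 1 / 2) :
    |(rk y (insert x W) : ℝ) - c| ≤ |(rk y (insert xs W) : ℝ) - c| := by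
  have hc' := abs_le.1 hc
  rw [rk_insert_of_le hxs le_rfl, Nat.cast_succ] at hc'
  rcases (ne_of_mem_of_not_mem hy hx).lt_or_gt with hyx | hxy <;>
    rcases (ne_of_mem_of_not_mem hy hxs).lt_or_gt with hyxs | hxsy
  · rw [rk_insert_of_lt hyx, rk_insert_of_lt hyxs]
  · rw [rk_insert_of_lt hyx, rk_insert_of_le hxs hxsy.le]
    have hs : (rk xs W : ℝ) + 1 ≤ rk y W := by exact_mod_cast rk_lt_rk hy hxsy
    push_cast
    exact abs_le_abs (by linarith) (by linarith)
  · rw [rk_insert_of_le hx hxy.le, rk_insert_of_lt hyxs]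
    have hs : (rk y W : ℝ) ≤ rk xs W := by exact_mod_cast rk_le_rk W hyxs.le
    push_cast
    rw [abs_sub_comm _ c, abs_sub_comm _ c]
    exact abs_le_abs (by linarith) (by linarith)
  · rw [rk_insert_of_le hx hxy.le, rk_insert_of_le hxs hxsy.le]

theorem stmt6 (X Y : Finset ℝ) (x xs : ℝ) (hd : Disjoint X Y) (hx : x ∈ X)
    (X' Xs : Finset ℝ) (hX' : X' = X.erase x) (hxs : xs ∉ X' ∪ Y)
    (hXs : Xs = insert xs X') (N : ℕ) (hN : N = X.card + Y.card)
    (habs : |(rk xs (Xs ∪ Y) : ℝ) - ((N : ℝ) + 1) / 2|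
        = if Odd N then 0 else 1 / 2) :
    ABT X Y ≥ ABT Xs Y := by
  have hxW : x ∉ X' ∪ Y := by
    rw [hX', mem_union, not_or]
    exact ⟨notMem_erase x X, disjoint_left.1 hd hx⟩
  have hXY : X ∪ Y = insert x (X' ∪ Y) := by rw [hX', ← insert_union, insert_erase hx]
  have hXsY : Xs ∪ Y = insert xs (X' ∪ Y) := by rw [hXs, insert_union]
  have hdXs : Disjoint Xs Y := by
    rw [hXs, hX', disjoint_insert_left]
    exact ⟨fun h => hxs (mem_union_right _ h), hd.mono_left (erase_subset x X)⟩
  have hcard : #(Xs ∪ Y) = N := by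
    rw [hN, ← card_union_of_disjoint hd, hXY, hXsY, card_insert_of_notMem hxW,
      card_insert_of_notMem hxs]
  have hcard' : #(X ∪ Y) = N := by rw [hN, card_union_of_disjoint hd]
  have hcentre : |(rk xs (Xs ∪ Y) : ℝ) - ((N : ℝ) + 1) / 2| ≤ 1 / 2 := by
    rw [habs]; split_ifs <;> norm_num
  have hYX : ABT Y X ≤ ABT Y Xs := by
    unfold ABT
    rw [union_comm Y X, union_comm Y Xs, hcard, hcard', hXY, hXsY]
    rw [hXsY] at hcentre
    exact sum_le_sum fun y hy => abs_rk_insert_sub_le hxW hxs (mem_union_right _ hy) hcentre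
  have hsum := ABT_add_ABT_swap hd
  have hsum' := ABT_add_ABT_swap hdXs
  rw [hcard'] at hsum
  rw [hcard] at hsum'
  linarith
end

section
/- Let X, Y be disjoint sets of distinct reals with |X| = n, |Y| = m, N = n + m, and X' ⊆ X a subset of size n' with N odd and n - n' even. Let X̂ be a set of n - n' distinct reals with X* = X̂ ∪ X', all values in X* ∪ Y distinct, whose ranks in X* ∪ Y are exactly the consecutive integers from (N+1)/2 - (n-n')/2 to (N+1)/2 + (n-n')/2 - 1. Then T(X*, Y) = T(X', Y) + (n² - n'²)/4, where T is the Ansari-Bradley statistic. -/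
open Finset

/-!
Put `S = X* ∪ Y`, `|S| = N = 2c - 1` and `n - n' = 2h`. The new points `X̂` occupy the ranks
`c - h, …, c + h - 1` of `S`, so they contribute `∑_{j=-h}^{h-1} |j| = h²` to `T(X*, Y)`. Every
point of `X' ∪ Y` lies either below the block, keeping its rank, or above it, gaining `2h`;
meanwhile the centre drops from `c` to `c - h` when `X̂` is removed. Either way each point of `X'`
is exactly `h` further from the centre in `S`, which adds `n' h`, and `n' h + h² = (n² - n'²)/4`.
-/

lemma rk_le_rk_s13 {x y : ℝ} (Z : Finset ℝ) (hxy : x ≤ y) : rk x Z ≤ rk y Z :=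
  card_le_card (monotone_filter_right Z fun _ _ hz => hz.trans hxy)

lemma rk_lt_rk_s13 {x y : ℝ} {Z : Finset ℝ} (hy : y ∈ Z) (hxy : x < y) : rk x Z < rk y Z :=
  card_lt_card ⟨monotone_filter_right Z fun _ _ hz => hz.trans hxy.le,
    fun hsub => (mem_filter.mp (hsub (mem_filter.mpr ⟨hy, le_rfl⟩))).2.not_gt hxy⟩

lemma rk_strictMonoOn (Z : Finset ℝ) : StrictMonoOn (rk · Z) Z :=
  fun _ _ _ hy hxy => rk_lt_rk_s13 hy hxy

lemma rk_union_of_disjoint {A B : Finset ℝ} (hAB : Disjoint A B) (a : ℝ) :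
    rk a (A ∪ B) = (A.filter (· ≤ a)).card + rk a B := by
  rw [rk, filter_union, card_union_of_disjoint (disjoint_filter_filter hAB), rk]

lemma sum_range_abs_sub (h : ℕ) : ∑ j ∈ range (2 * h), |(j : ℝ) - h| = (h : ℝ) ^ 2 := by
  induction h with
  | zero => simp
  | succ h ih =>
    rw [show 2 * (h + 1) = 2 * h + 1 + 1 by ring, sum_range_succ, sum_range_succ']
    have hshift : ∑ j ∈ range (2 * h), |((j + 1 : ℕ) : ℝ) - ((h + 1 : ℕ) : ℝ)|
        = ∑ j ∈ range (2 * h), |(j : ℝ) - h| :=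
      sum_congr rfl fun j _ => by push_cast; ring_nf
    have h0 : (0 : ℝ) ≤ h := h.cast_nonneg
    rw [hshift, ih, abs_of_nonpos (by push_cast; linarith), abs_of_nonneg (by push_cast; linarith)]
    push_cast
    ring

lemma sum_Ico_abs_sub {c h : ℕ} (hhc : h ≤ c) :
    ∑ i ∈ Ico (c - h) (c + h), |(i : ℝ) - c| = (h : ℝ) ^ 2 := by
  rw [sum_Ico_eq_sum_range, show c + h - (c - h) = 2 * h by omega, ← sum_range_abs_sub h]
  refine sum_congr rfl fun j _ => ?_
  rw [Nat.cast_add, Nat.cast_sub hhc]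
  ring_nf

section Block

variable {H B : Finset ℝ} {lo hi : ℕ}

lemma rk_mem_block (hblock : H.image (rk · (H ∪ B)) = Ico lo hi) {z : ℝ} (hz : z ∈ H) :
    lo ≤ rk z (H ∪ B) ∧ rk z (H ∪ B) < hi :=
  mem_Ico.mp (hblock ▸ mem_image_of_mem _ hz)

lemma rk_notMem_block (hHB : Disjoint H B) (hblock : H.image (rk · (H ∪ B)) = Ico lo hi)
    {a : ℝ} (ha : a ∈ B) : rk a (H ∪ B) < lo ∨ hi ≤ rk a (H ∪ B) := by
  by_contra! hin
  obtain ⟨z, hz, hza⟩ := mem_image.mp (hblock ▸ mem_Ico.mpr hin)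
  have : z = a := (rk_strictMonoOn _).injOn (mem_union_left B hz) (mem_union_right H ha) hza
  exact disjoint_left.mp hHB hz (this ▸ ha)

lemma rk_union_eq_of_lt_block (hHB : Disjoint H B)
    (hblock : H.image (rk · (H ∪ B)) = Ico lo hi) {a : ℝ} (ha : rk a (H ∪ B) < lo) :
    rk a (H ∪ B) = rk a B := by
  have hbelow : H.filter (· ≤ a) = ∅ := filter_eq_empty_iff.mpr fun z hz hza => by
    have := rk_le_rk_s13 (H ∪ B) hza
    have := (rk_mem_block hblock hz).1
    omega
  rw [rk_union_of_disjoint hHB, hbelow, card_empty, zero_add]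

lemma rk_union_eq_of_block_le (hHB : Disjoint H B)
    (hblock : H.image (rk · (H ∪ B)) = Ico lo hi) {a : ℝ} (ha : hi ≤ rk a (H ∪ B)) :
    rk a (H ∪ B) = H.card + rk a B := by
  have habove : H.filter (· ≤ a) = H := filter_eq_self.mpr fun z hz => by
    by_contra! hza
    have := rk_lt_rk_s13 (mem_union_left B hz) hza
    have := (rk_mem_block hblock hz).2
    omega
  rw [rk_union_of_disjoint hHB, habove]

variable {c h : ℕ}

lemma abs_rk_sub_of_block (hHB : Disjoint H B) (hH : H.card = 2 * h) (hhc : h ≤ c)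
    (hblock : H.image (rk · (H ∪ B)) = Ico (c - h) (c + h)) {a : ℝ} (ha : a ∈ B) :
    |(rk a (H ∪ B) : ℝ) - c| = |(rk a B : ℝ) - (c - h)| + h := by
  rcases rk_notMem_block hHB hblock ha with hlt | hge
  · have hr := rk_union_eq_of_lt_block hHB hblock hlt
    have hlt' : (rk a (H ∪ B) : ℝ) + h < c := by exact_mod_cast (by omega : rk a (H ∪ B) + h < c)
    rw [← hr, abs_of_neg (by linarith), abs_of_neg (by linarith)]
    ring
  · have hr := rk_union_eq_of_block_le hHB hblock hge
    rw [hH] at hr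
    have hge' : (c : ℝ) + h ≤ rk a (H ∪ B) := by exact_mod_cast hge
    have hr' : (rk a (H ∪ B) : ℝ) = 2 * h + rk a B := by exact_mod_cast hr
    rw [abs_of_nonneg (by linarith), abs_of_nonneg (by linarith)]
    linarith

lemma sum_abs_rk_sub_of_block (hhc : h ≤ c)
    (hblock : H.image (rk · (H ∪ B)) = Ico (c - h) (c + h)) :
    ∑ z ∈ H, |(rk z (H ∪ B) : ℝ) - c| = (h : ℝ) ^ 2 := by
  have hinj : Set.InjOn (rk · (H ∪ B)) H :=
    (rk_strictMonoOn _).injOn.mono (coe_subset.mpr subset_union_left)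
  rw [← sum_Ico_abs_sub hhc, ← hblock, sum_image hinj]

end Block

theorem ABT_union_of_block {H P Y : Finset ℝ} {c h : ℕ} (hHPY : Disjoint H (P ∪ Y))
    (hH : H.card = 2 * h) (hc : (P ∪ Y).card + 2 * h + 1 = 2 * c)
    (hblock : H.image (rk · (H ∪ P ∪ Y)) = Ico (c - h) (c + h)) :
    ABT (H ∪ P) Y = ABT P Y + P.card * h + (h : ℝ) ^ 2 := by
  have hhc : h ≤ c := by omega
  have hc' : ((P ∪ Y).card : ℝ) + 2 * h + 1 = 2 * c := by exact_mod_cast hc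
  have hS : H ∪ P ∪ Y = H ∪ (P ∪ Y) := union_assoc H P Y
  have hcentre : (((H ∪ (P ∪ Y)).card : ℝ) + 1) / 2 = c := by
    rw [card_union_of_disjoint hHPY, hH]
    push_cast
    linarith
  have hcentreP : (((P ∪ Y).card : ℝ) + 1) / 2 = c - h := by linarith
  rw [hS] at hblock
  unfold ABT
  rw [sum_union (disjoint_union_right.mp hHPY).1, hS, hcentre, hcentreP,
    sum_abs_rk_sub_of_block hhc hblock,
    sum_congr rfl fun a ha => abs_rk_sub_of_block hHPY hH hhc hblock (mem_union_left Y ha),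
    sum_add_distrib, sum_const, nsmul_eq_mul]
  ring

theorem stmt13_general (X Y Xp Xh Xs : Finset ℝ) (n m n' N : ℕ)
    (hd : Disjoint X Y) (hsub : Xp ⊆ X)
    (hm : Y.card = m) (hn' : Xp.card = n') (hN : N = n + m)
    (hodd : Odd N) (heven : Even (n - n')) (hle : n' ≤ n)
    (hXh : Xh.card = n - n') (hXs : Xs = Xh ∪ Xp)
    (hdisj : Disjoint Xh (Xp ∪ Y))
    (hranks : Xh.image (fun z => rk z (Xs ∪ Y))
        = Finset.Icc ((N + 1) / 2 - (n - n') / 2) ((N + 1) / 2 + (n - n') / 2 - 1)) :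
    ABT Xs Y = ABT Xp Y + ((n : ℝ) ^ 2 - (n' : ℝ) ^ 2) / 4 := by
  obtain ⟨h, hh⟩ := heven
  obtain ⟨t, ht⟩ := hodd
  have hXpY : Disjoint Xp Y := hd.mono_left hsub
  have hblock : Xh.image (rk · (Xh ∪ Xp ∪ Y)) = Ico ((N + 1) / 2 - h) ((N + 1) / 2 + h) := by
    rw [← hXs, hranks]
    ext i
    simp only [mem_Icc, mem_Ico]
    omega
  have hcard : (Xp ∪ Y).card + 2 * h + 1 = 2 * ((N + 1) / 2) := by
    rw [card_union_of_disjoint hXpY]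
    omega
  have hn : (n : ℝ) = n' + 2 * h := by exact_mod_cast (by omega : n = n' + 2 * h)
  rw [hXs, ABT_union_of_block hdisj (by omega) hcard hblock, hn, hn']
  ring

theorem stmt13 (X Y Xp Xh Xs : Finset ℝ) (n m n' N : ℕ)
    (hd : Disjoint X Y) (hsub : Xp ⊆ X)
    (hn : X.card = n) (hm : Y.card = m) (hn' : Xp.card = n') (hN : N = n + m)
    (hodd : Odd N) (heven : Even (n - n')) (hle : n' ≤ n)
    (hXh : Xh.card = n - n') (hXs : Xs = Xh ∪ Xp)
    (hdisj : Disjoint Xh (Xp ∪ Y))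
    (hranks : Xh.image (fun z => rk z (Xs ∪ Y))
        = Finset.Icc ((N + 1) / 2 - (n - n') / 2) ((N + 1) / 2 + (n - n') / 2 - 1)) :
    ABT Xs Y = ABT Xp Y + ((n : ℝ) ^ 2 - (n' : ℝ) ^ 2) / 4 :=
  stmt13_general X Y Xp Xh Xs n m n' N hd hsub hm hn' hN hodd heven hle hXh hXs hdisj hranks
end

section
/- Let X, Y be disjoint sets of distinct reals with |X| = n, |Y| = m, and Y' ⊆ Y a nonempty observed subset with |Y'| = m'. Then there exists a set Ŷ of m - m' distinct reals, each either smaller than min(X ∪ Y') or larger than max(X ∪ Y'), such that T(Ŷ ∪ Y', X) ≥ T(Y, X), where T is the Ansari-Bradley statistic. -/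
open Finset

lemma rk_erase_add {b : ℝ} {S : Finset ℝ} (hb : b ∈ S) (a : ℝ) :
    rk a (S.erase b) + (if b ≤ a then 1 else 0) = rk a S := by
  unfold rk
  rw [filter_erase]
  split_ifs with h
  · exact card_erase_add_one (mem_filter.2 ⟨hb, h⟩)
  · rw [erase_eq_of_notMem (a := b) fun h' => h (mem_filter.1 h').2, add_zero]

lemma rk_neg_add_rk {a : ℝ} {S : Finset ℝ} (ha : a ∈ S) :
    rk (-a) (S.map (Equiv.neg ℝ).toEmbedding) + rk a S = #S + 1 := by
  have hneg : rk (-a) (S.map (Equiv.neg ℝ).toEmbedding) = #{z ∈ S | a ≤ z} := by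
    simp [rk, filter_map]
  have hunion : {z ∈ S | a ≤ z} ∪ {z ∈ S | z ≤ a} = S := by
    rw [← filter_or]
    exact filter_true_of_mem fun z _ => le_total a z
  have hinter : {z ∈ S | a ≤ z} ∩ {z ∈ S | z ≤ a} = {a} := by
    rw [← filter_and]
    ext z
    simp only [mem_filter, mem_singleton, ← le_antisymm_iff]
    exact ⟨fun h => h.2.symm, fun h => ⟨h ▸ ha, h.symm⟩⟩
  rw [hneg, rk, ← card_union_add_card_inter, hunion, hinter, card_singleton]

lemma ABT_map_neg (A B : Finset ℝ) :
    ABT (A.map (Equiv.neg ℝ).toEmbedding) (B.map (Equiv.neg ℝ).toEmbedding) = ABT A B := by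
  unfold ABT
  rw [← map_union, card_map, sum_map]
  refine sum_congr rfl fun a ha => ?_
  have hrk : (rk (-a) ((A ∪ B).map (Equiv.neg ℝ).toEmbedding) : ℝ) =
      #(A ∪ B) + 1 - rk a (A ∪ B) := by
    rw [eq_sub_iff_add_eq]
    exact_mod_cast rk_neg_add_rk (mem_union_left B ha)
  rw [Equiv.coe_toEmbedding, Equiv.neg_apply, hrk, ← abs_neg]
  ring_nf

lemma rk_insert_erase_of_forall_lt {S : Finset ℝ} {a b t : ℝ} (ha : a ∈ S) (hb : b ∈ S)
    (hab : a ≠ b) (ht : ∀ w ∈ S, t < w) :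
    rk a (insert t (S.erase b)) = rk a S + if a < b then 1 else 0 := by
  have htS : t ∉ S.erase b := fun h => lt_irrefl t (ht t (mem_of_mem_erase h))
  have h1 := rk_insert_of_notMem htS a
  have h2 := rk_erase_add hb a
  rw [if_pos (ht a ha).le] at h1
  by_cases hlt : a < b
  · rw [if_neg (not_le.2 hlt)] at h2
    rw [if_pos hlt]
    omega
  · rw [if_pos ((not_lt.1 hlt).lt_of_ne' hab).le] at h2
    rw [if_neg hlt]
    omega

lemma card_filter_lt_add_one_le_rk {A S : Finset ℝ} {b : ℝ} (hAS : A ⊆ S) (hb : b ∈ S) :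
    #{a ∈ A.erase b | a < b} + 1 ≤ rk b S := by
  have hsub : {a ∈ A.erase b | a < b} ⊆ {z ∈ S | z ≤ b}.erase b := fun a ha => by
    obtain ⟨ha, hab⟩ := mem_filter.1 ha
    exact mem_erase.2 ⟨hab.ne, mem_filter.2 ⟨hAS (mem_of_mem_erase ha), hab.le⟩⟩
  have := card_erase_add_one (s := {z ∈ S | z ≤ b}) (mem_filter.2 ⟨hb, le_refl b⟩)
  have := card_le_card hsub
  rw [rk]
  omega

lemma ABT_le_insert_erase_of_forall_lt {X A : Finset ℝ} (hd : Disjoint X A) {b t : ℝ}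
    (hb : b ∈ A) (hrk : 2 * rk b (A ∪ X) ≤ #(A ∪ X) + 1) (ht : ∀ w ∈ A ∪ X, t < w) :
    ABT A X ≤ ABT (insert t (A.erase b)) X := by
  unfold ABT
  set S := A ∪ X
  set c : ℝ := ((#S : ℝ) + 1) / 2 with hc
  have hbS : b ∈ S := mem_union_left X hb
  have htS : t ∉ S.erase b := fun h => lt_irrefl t (ht t (mem_of_mem_erase h))
  have hunion : insert t (A.erase b) ∪ X = insert t (S.erase b) := by
    rw [insert_union, ← erase_eq_of_notMem (disjoint_right.1 hd hb), ← erase_union_distrib]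
  have hcard : #(insert t (S.erase b)) = #S := by
    rw [card_insert_of_notMem htS, card_erase_add_one hbS]
  have hrk_t : rk t (insert t (S.erase b)) = 1 := by
    rw [rk_insert_of_notMem htS, if_pos le_rfl, rk, card_eq_zero.2 (filter_eq_empty_iff.2
      fun w hw => not_le.2 (ht w (mem_of_mem_erase hw)))]
  have hterm (a) (ha : a ∈ A.erase b) : |(rk a S : ℝ) - c| ≤
      |(rk a (insert t (S.erase b)) : ℝ) - c| + if a < b then 1 else 0 := by
    rw [rk_insert_erase_of_forall_lt (mem_union_left X (mem_of_mem_erase ha)) hbS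
      (ne_of_mem_erase ha) ht]
    split_ifs
    · have := abs_sub_abs_le_abs_sub ((rk a S : ℝ) - c) (rk a S + 1 - c)
      push_cast
      norm_num at this
      linarith
    · rw [add_zero, add_zero]
  have hsum := sum_le_sum hterm
  rw [sum_add_distrib, sum_boole] at hsum
  have hbelow : (#{a ∈ A.erase b | a < b} : ℝ) + 1 ≤ rk b S := by
    exact_mod_cast card_filter_lt_add_one_le_rk subset_union_left hbS
  have hrk' : 2 * (rk b S : ℝ) ≤ #S + 1 := by exact_mod_cast hrk
  rw [hunion, hcard, ← hc, sum_insert fun h => htS (erase_subset_erase b subset_union_left h),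
    hrk_t, ← add_sum_erase A _ hb, Nat.cast_one, abs_of_nonpos (by linarith),
    abs_of_nonpos (by linarith)]
  linarith

def LiesOutside (z : ℝ) (S : Finset ℝ) : Prop := (∀ w ∈ S, z < w) ∨ (∀ w ∈ S, w < z)

lemma LiesOutside.notMem {z : ℝ} {S : Finset ℝ} (h : LiesOutside z S) : z ∉ S := fun hz =>
  h.elim (fun h => lt_irrefl z (h z hz)) (fun h => lt_irrefl z (h z hz))

lemma LiesOutside.mono {z : ℝ} {S T : Finset ℝ} (h : LiesOutside z S) (hTS : T ⊆ S) :
    LiesOutside z T :=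
  h.imp (fun h w hw => h w (hTS hw)) (fun h w hw => h w (hTS hw))

lemma exists_liesOutside_ABT_le {X A : Finset ℝ} (hd : Disjoint X A) {b : ℝ} (hb : b ∈ A) :
    ∃ t, LiesOutside t (A ∪ X) ∧ ABT A X ≤ ABT (insert t (A.erase b)) X := by
  by_cases hrk : 2 * rk b (A ∪ X) ≤ #(A ∪ X) + 1
  · obtain ⟨l, hl⟩ := (A ∪ X).bddBelow
    have ht (w) (hw : w ∈ A ∪ X) : l - 1 < w := by linarith [hl hw]
    exact ⟨l - 1, Or.inl ht, ABT_le_insert_erase_of_forall_lt hd hb hrk ht⟩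
  · have hneg := rk_neg_add_rk (mem_union_left X hb)
    set ν := (Equiv.neg ℝ).toEmbedding
    have hrk' : 2 * rk (-b) (A.map ν ∪ X.map ν) ≤ #(A.map ν ∪ X.map ν) + 1 := by
      rw [← map_union, card_map]
      omega
    obtain ⟨l, hl⟩ := (A.map ν ∪ X.map ν).bddBelow
    have ht (w) (hw : w ∈ A.map ν ∪ X.map ν) : l - 1 < w := by linarith [hl hw]
    refine ⟨-(l - 1), Or.inr fun w hw => lt_neg.2 (ht (-w) ?_), ?_⟩
    · rw [← map_union]
      exact mem_map_of_mem ν hw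
    calc ABT A X = ABT (A.map ν) (X.map ν) := (ABT_map_neg A X).symm
      _ ≤ ABT (insert (l - 1) ((A.map ν).erase (-b))) (X.map ν) :=
        ABT_le_insert_erase_of_forall_lt ((disjoint_map ν).2 hd) (mem_map_of_mem ν hb) hrk' ht
      _ = ABT (insert (-(l - 1)) (A.erase b)) X := by
        rw [← ABT_map_neg (insert _ _) X, map_insert, map_erase]
        simp [ν]

open Classical in
theorem exists_liesOutside_replacement (X Y' A : Finset ℝ) (hd : Disjoint X A)
    (hsub : Y' ⊆ A) :
    ∃ Yh : Finset ℝ, #Yh = #A - #Y' ∧ Disjoint Yh (X ∪ Y') ∧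
      (∀ z ∈ Yh, LiesOutside z (X ∪ Y')) ∧ ABT A X ≤ ABT (Yh ∪ Y') X := by
  by_cases hinside : ∃ b ∈ A \ Y', ¬LiesOutside b (X ∪ Y')
  · obtain ⟨b, hb, hb_inside⟩ := hinside
    obtain ⟨hbA, hbY'⟩ := mem_sdiff.1 hb
    obtain ⟨t, ht, hle⟩ := exists_liesOutside_ABT_le hd hbA
    have ht' : LiesOutside t (X ∪ Y') :=
      ht.mono (union_subset subset_union_right (hsub.trans subset_union_left))
    have htA : t ∉ A.erase b := fun h => ht.notMem (mem_union_left X (mem_of_mem_erase h))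
    have hd' : Disjoint X (insert t (A.erase b)) :=
      disjoint_insert_right.2 ⟨fun h => ht.notMem (mem_union_right A h),
        disjoint_of_subset_right (erase_subset b A) hd⟩
    have hsub' : Y' ⊆ insert t (A.erase b) := fun y hy =>
      mem_insert_of_mem (mem_erase.2 ⟨fun h => hbY' (h ▸ hy), hsub hy⟩)
    have hdec : #{z ∈ insert t (A.erase b) \ Y' | ¬LiesOutside z (X ∪ Y')} <
        #{z ∈ A \ Y' | ¬LiesOutside z (X ∪ Y')} := by
      refine card_lt_card <|
        (ssubset_iff_of_subset ?_).2 ⟨b, mem_filter.2 ⟨hb, hb_inside⟩, ?_⟩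
      · intro z
        simp only [mem_filter, mem_sdiff, mem_insert, mem_erase]
        rintro ⟨⟨rfl | ⟨-, hz⟩, hzY'⟩, hz_inside⟩
        · exact absurd ht' hz_inside
        · exact ⟨⟨hz, hzY'⟩, hz_inside⟩
      · simp only [mem_filter, mem_sdiff, mem_insert, mem_erase]
        rintro ⟨⟨rfl | ⟨hbb, -⟩, -⟩, -⟩
        · exact hb_inside ht'
        · exact hbb rfl
    obtain ⟨Yh, hcard, hdisj, hout, hABT⟩ := exists_liesOutside_replacement X Y' _ hd' hsub'
    refine ⟨Yh, ?_, hdisj, hout, hle.trans hABT⟩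
    rw [hcard, card_insert_of_notMem htA, card_erase_add_one hbA]
  · push Not at hinside
    refine ⟨A \ Y', card_sdiff_of_subset hsub, ?_, hinside, ?_⟩
    · exact disjoint_union_right.2
        ⟨disjoint_of_subset_left sdiff_subset hd.symm, sdiff_disjoint⟩
    · rw [sdiff_union_of_subset hsub]
termination_by #{z ∈ A \ Y' | ¬LiesOutside z (X ∪ Y')}

theorem stmt16_general (X Y Y' : Finset ℝ) (m m' : ℕ) (hd : Disjoint X Y)
    (hm : Y.card = m) (hsub : Y' ⊆ Y)
    (hm' : Y'.card = m') :
    ∃ Yh : Finset ℝ, Yh.card = m - m' ∧ Disjoint Yh (X ∪ Y') ∧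
      (∀ z ∈ Yh, (∀ w ∈ X ∪ Y', z < w) ∨ (∀ w ∈ X ∪ Y', w < z)) ∧
      ABT (Yh ∪ Y') X ≥ ABT Y X := by
  subst hm hm'
  exact exists_liesOutside_replacement X Y' Y hd hsub

theorem stmt16 (X Y Y' : Finset ℝ) (n m m' : ℕ) (hd : Disjoint X Y)
    (hn : X.card = n) (hm : Y.card = m) (hsub : Y' ⊆ Y) (hne : Y'.Nonempty)
    (hm' : Y'.card = m') :
    ∃ Yh : Finset ℝ, Yh.card = m - m' ∧ Disjoint Yh (X ∪ Y') ∧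
      (∀ z ∈ Yh, (∀ w ∈ X ∪ Y', z < w) ∨ (∀ w ∈ X ∪ Y', w < z)) ∧
      ABT (Yh ∪ Y') X ≥ ABT Y X :=
  stmt16_general X Y Y' m m' hd hm hsub hm'
end

section
/- Let X, Y be disjoint sets of distinct reals with N = |X| + |Y|. Let Ỹ ⊆ Y be nonempty with rank(y, X ∪ Y) ≤ (N+1)/2 for every y ∈ Ỹ, set Y' = Y \ Ỹ with |Y'| = m'. Let Ŷ be any set of m - m' distinct reals all strictly smaller than min(X ∪ Y'), with Y* = Ŷ ∪ Y' having all values distinct from X. Then T(X, Y*) ≤ T(X, Y), where T is the Ansari-Bradley statistic. -/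
open Finset

/-!
Write `U = X ∪ Y'`, so that the pooled samples are `U ∪ Ỹ` and `U ∪ Ŷ`, of the same size `N`.
For `x ∈ X` the new rank is `rk x U + |Ỹ|`, while the old one is `rk x U + #{y ∈ Ỹ : y ≤ x}`.
If all of `Ỹ` lies below `x` the two agree. Otherwise `x < max Ỹ`, so the new rank is at most
the rank of `max Ỹ`, which is at most `(N + 1) / 2` by hypothesis; the old rank is smaller still,
so moving the low-ranked `Ỹ` to the very bottom can only bring the ranks of `X` closer to the
centre `(N + 1) / 2`.
-/

lemma rk_union_of_disjoint_s17 (x : ℝ) {U V : Finset ℝ} (h : Disjoint U V) :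
    rk x (U ∪ V) = rk x U + rk x V := by
  rw [rk, filter_union, card_union_of_disjoint (disjoint_filter_filter h)]
  rfl

lemma rk_mono (Z : Finset ℝ) {x x' : ℝ} (h : x ≤ x') : rk x Z ≤ rk x' Z :=
  card_le_card (monotone_filter_right Z fun _ _ hz => hz.trans h)

lemma rk_le_card (x : ℝ) (Z : Finset ℝ) : rk x Z ≤ Z.card :=
  card_filter_le Z _

lemma rk_eq_card_of_forall_le {x : ℝ} {Z : Finset ℝ} (h : ∀ z ∈ Z, z ≤ x) : rk x Z = Z.card :=
  congrArg card (filter_true_of_mem h)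

lemma abs_sub_le_abs_sub_of_le_of_le {a b c : ℝ} (hab : a ≤ b) (hbc : b ≤ c) :
    |b - c| ≤ |a - c| := by
  rw [abs_of_nonpos (by linarith), abs_of_nonpos (by linarith)]
  linarith

section Replacement

variable {U S L : Finset ℝ} {x : ℝ}

lemma rk_union_le_rk_union_of_forall_le (hSU : Disjoint S U) (hLU : Disjoint L U)
    (hcard : L.card = S.card) (hL : ∀ z ∈ L, z ≤ x) :
    rk x (U ∪ S) ≤ rk x (U ∪ L) := by
  rw [rk_union_of_disjoint_s17 x hSU.symm, rk_union_of_disjoint_s17 x hLU.symm,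
    rk_eq_card_of_forall_le hL, hcard]
  exact Nat.add_le_add_left (rk_le_card x S) _

lemma rk_union_le_rk_max'_union (hSU : Disjoint S U) (hLU : Disjoint L U)
    (hcard : L.card = S.card) (hL : ∀ z ∈ L, z ≤ x) (hS : S.Nonempty) (hx : x ≤ S.max' hS) :
    rk x (U ∪ L) ≤ rk (S.max' hS) (U ∪ S) := by
  rw [rk_union_of_disjoint_s17 x hLU.symm, rk_union_of_disjoint_s17 _ hSU.symm,
    rk_eq_card_of_forall_le hL, rk_eq_card_of_forall_le (S.le_max' · ·), hcard]
  exact Nat.add_le_add_right (rk_mono U hx) _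

lemma abs_rk_union_sub_le (c : ℝ) (hSU : Disjoint S U) (hLU : Disjoint L U)
    (hcard : L.card = S.card) (hL : ∀ z ∈ L, z ≤ x)
    (hrank : ∀ y ∈ S, (rk y (U ∪ S) : ℝ) ≤ c) :
    |(rk x (U ∪ L) : ℝ) - c| ≤ |(rk x (U ∪ S) : ℝ) - c| := by
  by_cases hbelow : ∀ y ∈ S, y ≤ x
  · rw [rk_union_of_disjoint_s17 x hSU.symm, rk_union_of_disjoint_s17 x hLU.symm,
      rk_eq_card_of_forall_le hbelow, rk_eq_card_of_forall_le hL, hcard]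
  push Not at hbelow
  obtain ⟨y, hy, hxy⟩ := hbelow
  have hS : S.Nonempty := ⟨y, hy⟩
  have hx : x ≤ S.max' hS := hxy.le.trans (S.le_max' y hy)
  have hle_max : (rk x (U ∪ L) : ℝ) ≤ rk (S.max' hS) (U ∪ S) := by
    exact_mod_cast rk_union_le_rk_max'_union hSU hLU hcard hL hS hx
  refine abs_sub_le_abs_sub_of_le_of_le ?_ (hle_max.trans (hrank _ (S.max'_mem hS)))
  exact_mod_cast rk_union_le_rk_union_of_forall_le hSU hLU hcard hL

end Replacement

theorem stmt17_general (X Y Yt Yh : Finset ℝ) (m m' N : ℕ) (hd : Disjoint X Y)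
    (hN : N = X.card + Y.card) (hm : Y.card = m)
    (hsub : Yt ⊆ Y)
    (hrank : ∀ y ∈ Yt, (rk y (X ∪ Y) : ℝ) ≤ ((N : ℝ) + 1) / 2)
    (Y' : Finset ℝ) (hY' : Y' = Y \ Yt) (hm' : Y'.card = m')
    (hYh : Yh.card = m - m')
    (hlow : ∀ z ∈ Yh, ∀ w ∈ X ∪ Y', z < w) :
    ABT X (Yh ∪ Y') ≤ ABT X Y := by
  subst hY' hm hm'
  set U := X ∪ (Y \ Yt)
  have hcard : Yh.card = Yt.card := by
    have := card_le_card hsub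
    rw [hYh, card_sdiff_of_subset hsub]
    omega
  have hYhU : Disjoint Yh U := disjoint_left.mpr fun z hz hzU => (hlow z hz z hzU).false
  have hYtU : Disjoint Yt U :=
    disjoint_union_right.mpr ⟨hd.symm.mono_left hsub, sdiff_disjoint.symm⟩
  have hold : X ∪ Y = U ∪ Yt := by
    rw [union_assoc, sdiff_union_of_subset hsub]
  have hnew : X ∪ (Yh ∪ (Y \ Yt)) = U ∪ Yh := by
    rw [union_left_comm, union_comm]
  have hsize : (U ∪ Yh).card = (U ∪ Yt).card := by
    rw [card_union_of_disjoint hYhU.symm, card_union_of_disjoint hYtU.symm, hcard]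
  rw [hN, ← card_union_of_disjoint hd, hold] at hrank
  unfold ABT
  rw [hold, hnew, hsize]
  exact sum_le_sum fun x hx => abs_rk_union_sub_le _ hYtU hYhU hcard
    (fun z hz => (hlow z hz x (mem_union_left _ hx)).le) (by exact_mod_cast hrank)

theorem stmt17 (X Y Yt Yh : Finset ℝ) (m m' N : ℕ) (hd : Disjoint X Y)
    (hN : N = X.card + Y.card) (hm : Y.card = m)
    (hsub : Yt ⊆ Y) (hne : Yt.Nonempty)
    (hrank : ∀ y ∈ Yt, (rk y (X ∪ Y) : ℝ) ≤ ((N : ℝ) + 1) / 2)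
    (Y' : Finset ℝ) (hY' : Y' = Y \ Yt) (hm' : Y'.card = m')
    (hYh : Yh.card = m - m')
    (hlow : ∀ z ∈ Yh, ∀ w ∈ X ∪ Y', z < w) :
    ABT X (Yh ∪ Y') ≤ ABT X Y :=
  stmt17_general X Y Yt Yh m m' N hd hN hm hsub hrank Y' hY' hm' hYh hlow
end
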